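/- Let Δ be the root system F_4 and let α be a short root. Then there exist exactly three sets {β_1}, {β_2}, {β_3} of short roots (up to sign of the second member in each matched pair, i.e., up to replacing β by the appropriate involution image) such that (α, β_i) is a matched pair (α + β_i and α − β_i are roots), and the resulting induced orthogonal pairs (α + β_i, α − β_i) have R_i = ±{α + β_i, α − β_i} contained in Δ_sin_i for i = 1, 2, 3, where Δ_sin1, Δ_sin2, Δ_sin3 is the partition of the long roots into {±e_1±e_2, ±e_3±e_4}, {±e_1±e_4, ±e_2±e_3}, {±e_1±e_3, ±e_2±e_4}. Concretely: for every short root α of F_4 and every i ∈ {1, 2, 3}, there exists a short root β, unique up to sign, such that α + β and α − β are both roots lying in ±Δ_sin_i. -/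

import Mathlib

open scoped RealInnerProductSpace

/-- The standard basis vector `e_i` of `ℝ⁴`. -/
noncomputable def e (i : Fin 4) : EuclideanSpace ℝ (Fin 4) :=
  EuclideanSpace.single i 1

/-- The set `{±e_i ± e_j}` for fixed `i, j`. -/
def pmSet (i j : Fin 4) : Set (EuclideanSpace ℝ (Fin 4)) :=
  {v | ∃ ε δ : ℝ, (ε = 1 ∨ ε = -1) ∧ (δ = 1 ∨ δ = -1) ∧ v = ε • e i + δ • e j}

/-- Long roots of `F₄`: `±e_i ± e_j`, `i < j`. -/
def LongF4 : Set (EuclideanSpace ℝ (Fin 4)) :=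
  {v | ∃ i j : Fin 4, i < j ∧ v ∈ pmSet i j}

/-- Short roots of `F₄`: `±e_i` together with `(1/2)(±e₁ ± e₂ ± e₃ ± e₄)`. -/
def ShF4 : Set (EuclideanSpace ℝ (Fin 4)) :=
  {v | ∃ i : Fin 4, v = e i ∨ v = -e i} ∪
  {v | ∃ ε : Fin 4 → ℝ, (∀ i, ε i = 1 ∨ ε i = -1) ∧ v = (1 / 2 : ℝ) • ∑ i, ε i • e i}

/-- The partition of the long roots of `F₄`:
`Δ_sin1 = {±e₁±e₂, ±e₃±e₄}`, `Δ_sin2 = {±e₁±e₄, ±e₂±e₃}`, `Δ_sin3 = {±e₁±e₃, ±e₂±e₄}`. -/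
def sinF4 : Fin 3 → Set (EuclideanSpace ℝ (Fin 4)) :=
  ![pmSet 0 1 ∪ pmSet 2 3, pmSet 0 3 ∪ pmSet 1 2, pmSet 0 2 ∪ pmSet 1 3]

/-!
A matched partner `β` of a short root `α` is a short root of the same kind. For `α = ±e_k` it is
`β = ±e_l`, and `α ± β = ±e_k ± e_l` lie in `Δ_sin_i` exactly when `{k, l}` is one of the two
pairs of the perfect matching of `{1, 2, 3, 4}` defining `Δ_sin_i`; so `l` is the partner of `k`.
For `α = ½(ε₁, …, ε₄)` it is `β = ½(δ₁, …, δ₄)` where `δ` agrees with `ε` on one pair of that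
matching and disagrees on the other; the two choices of pair give `±β`.

All roots of `F₄` have half-integral coordinates, so after doubling the coordinates the
statement becomes a finite check over the 24 short roots, carried out by `decide`.
-/

namespace F4

noncomputable def half : (Fin 4 → ℤ) →+ EuclideanSpace ℝ (Fin 4) where
  toFun a := WithLp.toLp 2 fun k => (a k : ℝ) / 2
  map_zero' := by ext; simp
  map_add' a b := by ext; simp [add_div]

@[simp]
lemma half_apply (a : Fin 4 → ℤ) (k : Fin 4) : half a k = (a k : ℝ) / 2 := rfl

lemma half_injective : Function.Injective half := by
  intro a b h
  funext k
  simpa using congrArg (· k) h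

lemma half_eq_smul_sum (a : Fin 4 → ℤ) : half a = (1 / 2 : ℝ) • ∑ k, (a k : ℝ) • e k := by
  ext k
  simp [e, Pi.single_apply, div_eq_inv_mul]

def signs : List ℤ := [1, -1]

lemma exists_mem_signs_cast_eq_iff {x : ℝ} : (∃ s ∈ signs, (s : ℝ) = x) ↔ x = 1 ∨ x = -1 := by
  simp [signs, eq_comm]

def coordVec (i : Fin 4) (s : ℤ) : Fin 4 → ℤ := fun k => if k = i then 2 * s else 0

lemma half_coordVec (i : Fin 4) (s : ℤ) : half (coordVec i s) = (s : ℝ) • e i := by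
  ext k
  by_cases hk : k = i <;> simp [coordVec, e, hk]

def pmList (i j : Fin 4) : List (Fin 4 → ℤ) :=
  signs.flatMap fun s => signs.map fun t => coordVec i s + coordVec j t

def coordList : List (Fin 4 → ℤ) :=
  (List.finRange 4).flatMap fun i => signs.map (coordVec i)

def signVecList : List (Fin 4 → ℤ) :=
  signs.flatMap fun a => signs.flatMap fun b => signs.flatMap fun c => signs.map fun d =>
    ![a, b, c, d]

def shortList : List (Fin 4 → ℤ) := coordList ++ signVecList

def sinList (i : Fin 3) : List (Fin 4 → ℤ) :=
  ![pmList 0 1 ++ pmList 2 3, pmList 0 3 ++ pmList 1 2, pmList 0 2 ++ pmList 1 3] i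

lemma mem_signVecList_iff {r : Fin 4 → ℤ} : r ∈ signVecList ↔ ∀ k, r k ∈ signs := by
  simp only [signVecList, List.mem_flatMap, List.mem_map]
  constructor
  · rintro ⟨a, ha, b, hb, c, hc, d, hd, rfl⟩ k
    fin_cases k <;> assumption
  · intro h
    exact ⟨r 0, h 0, r 1, h 1, r 2, h 2, r 3, h 3, by ext k; fin_cases k <;> rfl⟩

lemma pmSet_eq_image (i j : Fin 4) : pmSet i j = half '' {r | r ∈ pmList i j} := by
  ext v
  simp [pmSet, pmList, signs, map_add, half_coordVec, or_and_right, exists_or, eq_comm, or_assoc]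

lemma shF4_eq_image : ShF4 = half '' {r | r ∈ shortList} := by
  have coord : {v | ∃ i, v = e i ∨ v = -e i} = half '' {r | r ∈ coordList} := by
    ext v
    simp [coordList, signs, half_coordVec, or_and_right, exists_or, eq_comm]
  have halfSigns : {v | ∃ ε : Fin 4 → ℝ, (∀ i, ε i = 1 ∨ ε i = -1) ∧
      v = (1 / 2 : ℝ) • ∑ i, ε i • e i} = half '' {r | r ∈ signVecList} := by
    ext v
    constructor
    · rintro ⟨ε, hε, rfl⟩
      choose s hs hsε using fun k => exists_mem_signs_cast_eq_iff.2 (hε k)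
      exact ⟨s, mem_signVecList_iff.2 hs, by simp_rw [half_eq_smul_sum, hsε]⟩
    · rintro ⟨r, hr, rfl⟩
      exact ⟨fun k => r k,
        fun k => exists_mem_signs_cast_eq_iff.1 ⟨r k, mem_signVecList_iff.1 hr k, rfl⟩,
        half_eq_smul_sum r⟩
  rw [ShF4, coord, halfSigns, ← Set.image_union]
  congr 1
  ext r
  simp [shortList]

lemma sinF4_eq_image (i : Fin 3) : sinF4 i = half '' {r | r ∈ sinList i} := by
  ext v
  fin_cases i <;> simp [sinF4, sinList, pmSet_eq_image, or_and_right, exists_or]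

lemma half_mem_sinF4_iff (r : Fin 4 → ℤ) (i : Fin 3) : half r ∈ sinF4 i ↔ r ∈ sinList i := by
  rw [sinF4_eq_image]
  exact half_injective.mem_set_image

theorem exists_matched_partner_doubled : ∀ a ∈ shortList, ∀ i : Fin 3, ∃ b ∈ shortList,
    a + b ∈ sinList i ∧ a - b ∈ sinList i ∧
    ∀ b' ∈ shortList, a + b' ∈ sinList i → a - b' ∈ sinList i → b' = b ∨ b' = -b := by
  decide

end F4

/-- for every short root `α` of `F₄` and every `i ∈ {1,2,3}` there is a
short root `β`, unique up to sign, such that `α + β` and `α − β` are both roots lying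
in `Δ_sin_i`. -/
theorem matched_partner_exists_unique_F4
    (α : EuclideanSpace ℝ (Fin 4)) (hα : α ∈ ShF4) (i : Fin 3) :
    ∃ β : EuclideanSpace ℝ (Fin 4), β ∈ ShF4 ∧
      α + β ∈ sinF4 i ∧ α - β ∈ sinF4 i ∧
      ∀ β' : EuclideanSpace ℝ (Fin 4), β' ∈ ShF4 →
        α + β' ∈ sinF4 i → α - β' ∈ sinF4 i → β' = β ∨ β' = -β := by
  open F4 in
  rw [shF4_eq_image] at hα ⊢
  obtain ⟨a, ha, rfl⟩ := hα
  obtain ⟨b, hb, hplus, hminus, unique⟩ := exists_matched_partner_doubled a ha i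
  refine ⟨half b, ⟨b, hb, rfl⟩, ?_, ?_, ?_⟩
  · rwa [← map_add, half_mem_sinF4_iff]
  · rwa [← map_sub, half_mem_sinF4_iff]
  · rintro _ ⟨b', hb', rfl⟩ hplus' hminus'
    rw [← map_add, half_mem_sinF4_iff] at hplus'
    rw [← map_sub, half_mem_sinF4_iff] at hminus'
    rcases unique b' hb' hplus' hminus' with rfl | rfl
    · exact .inl rfl
    · exact .inr (map_neg half b)
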